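/- Let W_Θ ⊆ W be a parabolic subgroup. The restriction of the quotient map S → S_W = S/((S^W)⁺S) to the invariant ring S^{W_Θ} is surjective onto the relative coinvariant ring S_W^{W_Θ} (the W_Θ-invariants of S_W), and its kernel equals (S^W)⁺ · S^{W_Θ}; hence S_W^{W_Θ} ≅ S^{W_Θ}/((S^W)⁺·S^{W_Θ}) ≅ S^{W_Θ} ⊗_{S^W} ℝ. -/

import Mathlib

/-!
The reflection group `W` is finite: it maps the finite root set into itself and fixes the
orthogonal complement of the span of the roots pointwise, so an element of `W` is determined by
its action on the roots. Hence `W_Θ ≤ W` is finite and has a Reynolds operator `ρ`, which fixes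
`S^{W_Θ}` and is `S^{W_Θ}`-linear. Averaging any lift of a `W_Θ`-invariant class of `S_W`
gives a `W_Θ`-invariant lift, because `(S^W)⁺S` is `W`-stable. If `f ∈ S^{W_Θ}` lies in
`(S^W)⁺S`, say `f = ∑ cᵢ aᵢ` with `aᵢ ∈ (S^W)⁺`, then `f = ρ f = ∑ ρ(cᵢ) aᵢ ∈ (S^W)⁺·S^{W_Θ}`.
-/

open scoped RealInnerProductSpace

/-- The reflection in the vector `γ`: `x ↦ x − (2⟨x,γ⟩/⟨γ,γ⟩)γ`. -/
noncomputable def reflectRoot {n : ℕ} (γ x : EuclideanSpace ℝ (Fin n)) :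
    EuclideanSpace ℝ (Fin n) :=
  x - (2 * ⟪x, γ⟫ / ⟪γ, γ⟫) • γ

/-- The coroot functional `γ̌(x) = 2⟨x,γ⟩/⟨γ,γ⟩`. -/
noncomputable def corootPair {n : ℕ} (γ x : EuclideanSpace ℝ (Fin n)) : ℝ :=
  2 * ⟪x, γ⟫ / ⟪γ, γ⟫

/-- A (reduced) root system in Euclidean space `ℝ^n` together with a choice of simple
system `Δ` and the corresponding positive system `pos`. -/
structure RootData (n : ℕ) where
  /-- The set of roots. -/
  Φ : Set (EuclideanSpace ℝ (Fin n))
  /-- The simple system. -/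
  Δ : Set (EuclideanSpace ℝ (Fin n))
  /-- The positive system determined by `Δ`. -/
  pos : Set (EuclideanSpace ℝ (Fin n))
  finite : Φ.Finite
  nonzero : ∀ γ ∈ Φ, γ ≠ 0
  reduced : ∀ γ ∈ Φ, ∀ t : ℝ, t • γ ∈ Φ → t = 1 ∨ t = -1
  reflect_mem : ∀ γ ∈ Φ, ∀ β ∈ Φ, reflectRoot γ β ∈ Φ
  Δ_sub : Δ ⊆ pos
  pos_sub : pos ⊆ Φ
  simple_indep : LinearIndependent ℝ (fun a : Δ => (a : EuclideanSpace ℝ (Fin n)))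
  pos_combo : ∀ γ ∈ pos, ∃ c : EuclideanSpace ℝ (Fin n) →₀ ℝ,
    ↑c.support ⊆ Δ ∧ (∀ a, 0 ≤ c a) ∧ γ = c.sum fun a t => t • a
  pos_partition : ∀ γ ∈ Φ, (γ ∈ pos ∧ -γ ∉ pos) ∨ (γ ∉ pos ∧ -γ ∈ pos)

/-- A vector in ℝ^n regarded as a linear form, i.e. a degree-one polynomial. -/
noncomputable def toPoly {n : ℕ} (v : EuclideanSpace ℝ (Fin n)) :
    MvPolynomial (Fin n) ℝ :=
  ∑ i, MvPolynomial.C (v i) * MvPolynomial.X i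

/-- The action of a linear automorphism of ℝ^n on the polynomial ring S = Sym(ℝ^n),
determined by its action on the degree-one part. -/
noncomputable def polyAct {n : ℕ}
    (g : EuclideanSpace ℝ (Fin n) ≃ₗ[ℝ] EuclideanSpace ℝ (Fin n)) :
    MvPolynomial (Fin n) ℝ →ₐ[ℝ] MvPolynomial (Fin n) ℝ :=
  MvPolynomial.aeval fun i => toPoly (g (EuclideanSpace.single i 1))

/-- The action of the reflection s_γ on the polynomial ring S = Sym(ℝ^n). -/
noncomputable def reflPolyAct {n : ℕ} (γ : EuclideanSpace ℝ (Fin n)) :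
    MvPolynomial (Fin n) ℝ →ₐ[ℝ] MvPolynomial (Fin n) ℝ :=
  MvPolynomial.aeval fun i => toPoly (reflectRoot γ (EuclideanSpace.single i 1))

/-- The reflection group `W` generated by the reflections in the roots. -/
noncomputable def RootData.W {n : ℕ} (R : RootData n) :
    Subgroup (EuclideanSpace ℝ (Fin n) ≃ₗ[ℝ] EuclideanSpace ℝ (Fin n)) :=
  Subgroup.closure {σ | ∃ γ ∈ R.Φ, ∀ x, σ x = reflectRoot γ x}

/-- The parabolic subgroup generated by reflections in the simple roots of `Θ`. -/
noncomputable def parabolic {n : ℕ} (Θ : Set (EuclideanSpace ℝ (Fin n))) :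
    Subgroup (EuclideanSpace ℝ (Fin n) ≃ₗ[ℝ] EuclideanSpace ℝ (Fin n)) :=
  Subgroup.closure {σ | ∃ γ ∈ Θ, ∀ x, σ x = reflectRoot γ x}

/-- The set of polynomials invariant under the group `G`. -/
def invSet {n : ℕ}
    (G : Subgroup (EuclideanSpace ℝ (Fin n) ≃ₗ[ℝ] EuclideanSpace ℝ (Fin n))) :
    Set (MvPolynomial (Fin n) ℝ) :=
  {f | ∀ w ∈ G, polyAct w f = f}

/-- The ideal generated by the positive-degree `G`-invariant polynomials. -/
noncomputable def invIdeal {n : ℕ}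
    (G : Subgroup (EuclideanSpace ℝ (Fin n) ≃ₗ[ℝ] EuclideanSpace ℝ (Fin n))) :
    Ideal (MvPolynomial (Fin n) ℝ) :=
  Ideal.span {f | f ∈ invSet G ∧ MvPolynomial.constantCoeff f = 0}

/-- `x` in the coinvariant ring `S/I` is `G`-invariant (for the induced action):
every lift of `x` is sent to a lift of `x` by every element of `G`. -/
def relInv {n : ℕ}
    (G : Subgroup (EuclideanSpace ℝ (Fin n) ≃ₗ[ℝ] EuclideanSpace ℝ (Fin n)))
    (I : Ideal (MvPolynomial (Fin n) ℝ)) (x : MvPolynomial (Fin n) ℝ ⧸ I) : Prop :=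
  ∀ w ∈ G, ∀ F : MvPolynomial (Fin n) ℝ,
    Ideal.Quotient.mk I F = x → Ideal.Quotient.mk I (polyAct w F) = x

open Pointwise MvPolynomial

section PolyAct

variable {n : ℕ}

noncomputable def toPolyₗ : EuclideanSpace ℝ (Fin n) →ₗ[ℝ] MvPolynomial (Fin n) ℝ :=
  Fintype.linearCombination ℝ X ∘ₗ (WithLp.linearEquiv 2 ℝ (Fin n → ℝ)).toLinearMap

lemma toPolyₗ_apply (v : EuclideanSpace ℝ (Fin n)) : toPolyₗ v = toPoly v := by
  simp [toPolyₗ, toPoly, Fintype.linearCombination_apply, smul_eq_C_mul]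

lemma toPoly_single (i : Fin n) : toPoly (EuclideanSpace.single i (1 : ℝ)) = X i := by
  simp [toPoly]

lemma polyAct_toPoly (g : EuclideanSpace ℝ (Fin n) ≃ₗ[ℝ] EuclideanSpace ℝ (Fin n))
    (v : EuclideanSpace ℝ (Fin n)) : polyAct g (toPoly v) = toPoly (g v) := by
  have hcomm : (polyAct g).toLinearMap ∘ₗ toPolyₗ = toPolyₗ ∘ₗ g.toLinearMap :=
    (EuclideanSpace.basisFun (Fin n) ℝ).toBasis.ext fun i => by
      simp [toPolyₗ_apply, toPoly_single, polyAct]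
  simpa [toPolyₗ_apply] using LinearMap.congr_fun hcomm v

lemma polyAct_mul (g h : EuclideanSpace ℝ (Fin n) ≃ₗ[ℝ] EuclideanSpace ℝ (Fin n)) :
    polyAct (g * h) = (polyAct g).comp (polyAct h) :=
  algHom_ext fun i => by
    simp only [AlgHom.comp_apply, polyAct, aeval_X]
    rw [← polyAct, polyAct_toPoly, LinearEquiv.mul_apply]

end PolyAct

section Finiteness

variable {n : ℕ}

lemma reflectRoot_reflectRoot (γ x : EuclideanSpace ℝ (Fin n)) :
    reflectRoot γ (reflectRoot γ x) = x := by
  rcases eq_or_ne γ 0 with rfl | hγ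
  · simp [reflectRoot]
  have hγγ : ⟪γ, γ⟫ ≠ 0 := inner_self_ne_zero.2 hγ
  have hcoeff :
      2 * (⟪x, γ⟫ - 2 * ⟪x, γ⟫ / ⟪γ, γ⟫ * ⟪γ, γ⟫) / ⟪γ, γ⟫ = -(2 * ⟪x, γ⟫ / ⟪γ, γ⟫) := by
    field_simp
    ring
  simp only [reflectRoot, inner_sub_left, real_inner_smul_left, hcoeff]
  module

lemma RootData.W_le_stabilizer (R : RootData n) : R.W ≤ MulAction.stabilizer _ R.Φ := by
  refine (Subgroup.closure_le _).2 ?_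
  rintro σ ⟨γ, hγ, hσ⟩
  have hmaps : σ • R.Φ ⊆ R.Φ := Set.smul_set_subset_iff.2 fun β hβ => by
    rw [LinearEquiv.smul_def, hσ]
    exact R.reflect_mem γ hγ β hβ
  refine hmaps.antisymm fun β hβ => ?_
  have hinvol : σ • σ • β = β := by
    simp only [LinearEquiv.smul_def, hσ, reflectRoot_reflectRoot]
  exact hinvol ▸ Set.smul_mem_smul_set (hmaps (Set.smul_mem_smul_set hβ))

lemma RootData.W_le_fixingSubgroup (R : RootData n) :
    R.W ≤ fixingSubgroup _ ((Submodule.span ℝ R.Φ)ᗮ : Set (EuclideanSpace ℝ (Fin n))) := by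
  refine (Subgroup.closure_le _).2 ?_
  rintro σ ⟨γ, hγ, hσ⟩
  refine (mem_fixingSubgroup_iff _).2 fun x hx => ?_
  rw [LinearEquiv.smul_def, hσ, reflectRoot, real_inner_comm,
    Submodule.inner_right_of_mem_orthogonal (Submodule.subset_span hγ) hx]
  simp

lemma RootData.eq_of_eqOn_roots (R : RootData n)
    {w w' : EuclideanSpace ℝ (Fin n) ≃ₗ[ℝ] EuclideanSpace ℝ (Fin n)} (hw : w ∈ R.W)
    (hw' : w' ∈ R.W) (h : Set.EqOn w w' R.Φ) : w = w' := by
  set K := Submodule.span ℝ R.Φ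
  have hK : Set.EqOn w w' K := LinearMap.eqOn_span' (f := w.toLinearMap) (g := w'.toLinearMap) h
  have hfix := (mem_fixingSubgroup_iff _).1 (R.W_le_fixingSubgroup hw)
  have hfix' := (mem_fixingSubgroup_iff _).1 (R.W_le_fixingSubgroup hw')
  have hKperp : Set.EqOn w w' Kᗮ := fun x hx => (hfix x hx).trans (hfix' x hx).symm
  apply LinearEquiv.toLinearMap_injective
  refine LinearMap.ext_on (s := K ∪ Kᗮ) ?_ (hK.union hKperp)
  rw [Submodule.span_union, K.span_eq, Kᗮ.span_eq, K.sup_orthogonal_of_hasOrthogonalProjection]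

lemma RootData.finite_W (R : RootData n) : Finite R.W := by
  have : Finite R.Φ := R.finite.to_subtype
  have hmem (w : R.W) {β} (hβ : β ∈ R.Φ) : w.1 β ∈ R.Φ := by
    rw [← (R.W_le_stabilizer w.2 : w.1 • R.Φ = R.Φ)]
    exact Set.smul_mem_smul_set hβ
  refine Finite.of_injective (fun w : R.W => fun β : R.Φ => (⟨w.1 β, hmem w β.2⟩ : R.Φ)) ?_
  intro w w' h
  exact Subtype.ext <| R.eq_of_eqOn_roots w.2 w'.2 fun β hβ =>
    congrArg Subtype.val (congrFun h ⟨β, hβ⟩)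

lemma RootData.parabolic_le_W (R : RootData n) {Θ : Set (EuclideanSpace ℝ (Fin n))}
    (hΘ : Θ ⊆ R.Δ) : parabolic Θ ≤ R.W :=
  Subgroup.closure_mono fun _ ⟨γ, hγ, hσ⟩ => ⟨γ, R.pos_sub (R.Δ_sub (hΘ hγ)), hσ⟩

end Finiteness

section Invariants

variable {n : ℕ}

lemma invSet_anti {G H : Subgroup (EuclideanSpace ℝ (Fin n) ≃ₗ[ℝ] EuclideanSpace ℝ (Fin n))}
    (hHG : H ≤ G) : invSet G ⊆ invSet H :=
  fun _ hf w hw => hf w (hHG hw)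

variable (G : Subgroup (EuclideanSpace ℝ (Fin n) ≃ₗ[ℝ] EuclideanSpace ℝ (Fin n)))

lemma invIdeal_le_comap_polyAct {w : EuclideanSpace ℝ (Fin n) ≃ₗ[ℝ] EuclideanSpace ℝ (Fin n)}
    (hw : w ∈ G) : invIdeal G ≤ (invIdeal G).comap (polyAct w) :=
  Ideal.span_le.2 fun f hf => by
    rw [SetLike.mem_coe, Ideal.mem_comap, hf.1 w hw]
    exact Ideal.subset_span hf

lemma inv_card_smul_sum_const {ι M : Type*} [Fintype ι] [Nonempty ι] [AddCommGroup M]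
    [Module ℝ M] (x : M) : (Fintype.card ι : ℝ)⁻¹ • ∑ _i : ι, x = x := by
  rw [Finset.sum_const, Finset.card_univ, ← Nat.cast_smul_eq_nsmul ℝ, smul_smul,
    inv_mul_cancel₀ (Nat.cast_ne_zero.2 Fintype.card_ne_zero), one_smul]

variable [Fintype G]

noncomputable def reynolds : MvPolynomial (Fin n) ℝ →ₗ[ℝ] MvPolynomial (Fin n) ℝ :=
  (Fintype.card G : ℝ)⁻¹ • ∑ w : G, (polyAct w.1).toLinearMap

lemma reynolds_apply (f : MvPolynomial (Fin n) ℝ) :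
    reynolds G f = (Fintype.card G : ℝ)⁻¹ • ∑ w : G, polyAct w.1 f := by
  simp [reynolds, LinearMap.sum_apply]

lemma reynolds_of_mem_invSet {f : MvPolynomial (Fin n) ℝ} (hf : f ∈ invSet G) :
    reynolds G f = f := by
  rw [reynolds_apply, Finset.sum_congr rfl fun w _ => hf w.1 w.2, inv_card_smul_sum_const]

lemma reynolds_mem_invSet (f : MvPolynomial (Fin n) ℝ) : reynolds G f ∈ invSet G := by
  intro w hw
  rw [reynolds_apply, map_smul, map_sum]
  refine congrArg _ (Fintype.sum_equiv (Equiv.mulLeft (⟨w, hw⟩ : G)) _ _ fun u => ?_)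
  change polyAct w (polyAct u.1 f) = polyAct (w * u.1) f
  rw [polyAct_mul, AlgHom.comp_apply]

lemma reynolds_mul_of_mem_invSet (r : MvPolynomial (Fin n) ℝ) {b : MvPolynomial (Fin n) ℝ}
    (hb : b ∈ invSet G) : reynolds G (r * b) = reynolds G r * b := by
  simp only [reynolds_apply, smul_mul_assoc, Finset.sum_mul, map_mul, hb _ (Subtype.prop _)]

end Invariants

section RelativeCoinvariants

variable {n : ℕ} {G H : Subgroup (EuclideanSpace ℝ (Fin n) ≃ₗ[ℝ] EuclideanSpace ℝ (Fin n))}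
  [Fintype H]

theorem relInv_iff_mem_image_invSet {I : Ideal (MvPolynomial (Fin n) ℝ)}
    (hI : ∀ w ∈ H, I ≤ I.comap (polyAct w)) (x : MvPolynomial (Fin n) ℝ ⧸ I) :
    relInv H I x ↔ x ∈ Ideal.Quotient.mk I '' invSet H := by
  constructor
  · intro hx
    obtain ⟨F, rfl⟩ := Ideal.Quotient.mk_surjective x
    refine ⟨reynolds H F, reynolds_mem_invSet H F, ?_⟩
    calc Ideal.Quotient.mk I (reynolds H F)
        = (Fintype.card H : ℝ)⁻¹ • ∑ w : H, Ideal.Quotient.mk I (polyAct w.1 F) := by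
          rw [reynolds_apply, ← Ideal.Quotient.mkₐ_eq_mk ℝ I, map_smul, map_sum]
      _ = Ideal.Quotient.mk I F := by
          rw [Finset.sum_congr rfl fun w _ => hx w.1 w.2 F rfl, inv_card_smul_sum_const]
  · rintro ⟨f, hf, rfl⟩ w hw F hF
    rw [Ideal.Quotient.eq] at hF ⊢
    rw [← hf w hw, ← map_sub]
    exact hI w hw hF

theorem mk_invIdeal_eq_zero_iff (hHG : H ≤ G) {f : MvPolynomial (Fin n) ℝ} (hf : f ∈ invSet H) :
    Ideal.Quotient.mk (invIdeal G) f = 0 ↔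
      f ∈ Submodule.span ℝ {h : MvPolynomial (Fin n) ℝ |
        ∃ a b, a ∈ invSet G ∧ constantCoeff a = 0 ∧ b ∈ invSet H ∧ h = a * b} := by
  rw [Ideal.Quotient.eq_zero_iff_mem]
  constructor
  · intro hfI
    obtain ⟨c, hc, hsum⟩ := Submodule.mem_span_set.1 hfI
    rw [← reynolds_of_mem_invSet H hf, ← hsum, Finsupp.sum, map_sum]
    refine Submodule.sum_mem _ fun a ha => ?_
    obtain ⟨haG, ha0⟩ := hc ha
    rw [smul_eq_mul, reynolds_mul_of_mem_invSet H _ (invSet_anti hHG haG), mul_comm]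
    exact Submodule.subset_span ⟨a, _, haG, ha0, reynolds_mem_invSet H _, rfl⟩
  · refine fun hspan => (Submodule.span_le (p := (invIdeal G).restrictScalars ℝ)).2 ?_ hspan
    rintro _ ⟨a, b, haG, ha0, -, rfl⟩
    exact Ideal.mul_mem_right _ _ (Ideal.subset_span ⟨haG, ha0⟩)

end RelativeCoinvariants

/-- the restriction of the quotient map S → S_W to the invariant ring
S^{W_Θ} is surjective onto the relative coinvariant ring S_W^{W_Θ} (the W_Θ-invariants
of S_W), and its kernel is (S^W)⁺·S^{W_Θ}; hence
S_W^{W_Θ} ≅ S^{W_Θ}/((S^W)⁺·S^{W_Θ}) ≅ S^{W_Θ} ⊗_{S^W} ℝ. -/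
theorem relative_coinvariants_from_invariants {n : ℕ} (R : RootData n)
    (Θ : Set (EuclideanSpace ℝ (Fin n))) (hΘ : Θ ⊆ R.Δ) :
    {x : MvPolynomial (Fin n) ℝ ⧸ invIdeal R.W | relInv (parabolic Θ) (invIdeal R.W) x} =
        Ideal.Quotient.mk (invIdeal R.W) '' invSet (parabolic Θ) ∧
      ∀ f ∈ invSet (parabolic Θ),
        (Ideal.Quotient.mk (invIdeal R.W) f = 0 ↔
          f ∈ Submodule.span ℝ {h : MvPolynomial (Fin n) ℝ |
            ∃ a b, a ∈ invSet R.W ∧ MvPolynomial.constantCoeff a = 0 ∧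
              b ∈ invSet (parabolic Θ) ∧ h = a * b}) := by
  have hle := R.parabolic_le_W hΘ
  have := R.finite_W
  have : Finite (parabolic Θ) := Finite.of_injective _ (Subgroup.inclusion_injective hle)
  let := Fintype.ofFinite (parabolic Θ)
  exact ⟨Set.ext fun x =>
      relInv_iff_mem_image_invSet (fun w hw => invIdeal_le_comap_polyAct R.W (hle hw)) x,
    fun f hf => mk_invIdeal_eq_zero_iff hle hf⟩
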